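/- Every sofic group is hyperlinear. -/

import Mathlib

/-- Normalized Hamming distance on the symmetric group of a finite set. -/
noncomputable def hamDist {F : Type*} [Fintype F] (α β : Equiv.Perm F) : ℝ :=
  (Nat.card {f : F // α f ≠ β f} : ℝ) / (Fintype.card F : ℝ)

/-- A group is sofic if every finite subset admits `(K,ε)`-approximations into
finite symmetric groups with the normalized Hamming distance. -/
def IsSofic (G : Type*) [Group G] : Prop :=
  ∀ (K : Finset G) (ε : ℝ), 0 < ε →
    ∃ (F : Type) (_ : Fintype F) (_ : Nonempty F) (φ : G → Equiv.Perm F),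
      (∀ k₁ ∈ K, ∀ k₂ ∈ K, hamDist (φ (k₁ * k₂)) (φ k₁ * φ k₂) ≤ ε) ∧
      (∀ k₁ ∈ K, ∀ k₂ ∈ K, k₁ ≠ k₂ → 1 - ε ≤ hamDist (φ k₁) (φ k₂))

/-- Amenability via Følner sets: for every finite `S ⊆ G` and `ε > 0` there is a
nonempty finite `F ⊆ G` with `|F \ sF| < ε|F|` for all `s ∈ S`. -/
def IsAmenableFolner (G : Type*) [Group G] [DecidableEq G] : Prop :=
  ∀ (S : Finset G) (ε : ℝ), 0 < ε →
    ∃ F : Finset G, F.Nonempty ∧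
      ∀ s ∈ S, ((F \ F.image (s * ·)).card : ℝ) < ε * F.card

/-- Normalized Hilbert–Schmidt distance on `n × n` complex matrices. -/
noncomputable def dHS {n : ℕ} (u v : Matrix (Fin n) (Fin n) ℂ) : ℝ :=
  Real.sqrt ((1 / (n : ℝ)) * ∑ i, ∑ j, ‖u i j - v i j‖ ^ 2)

/-- A group is hyperlinear if every finite subset admits `(K,ε)`-approximations
into finite-dimensional unitary groups with the normalized Hilbert–Schmidt
distance. -/
def IsHyperlinear (G : Type*) [Group G] : Prop :=
  ∀ (K : Finset G) (ε : ℝ), 0 < ε →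
    ∃ n : ℕ, 0 < n ∧ ∃ θ : G → Matrix.unitaryGroup (Fin n) ℂ,
      (∀ k₁ ∈ K, ∀ k₂ ∈ K,
        dHS (θ (k₁ * k₂) : Matrix (Fin n) (Fin n) ℂ)
          ((θ k₁ * θ k₂ : Matrix.unitaryGroup (Fin n) ℂ) : Matrix (Fin n) (Fin n) ℂ) ≤ ε) ∧
      (∀ k₁ ∈ K, ∀ k₂ ∈ K, k₁ ≠ k₂ →
        Real.sqrt 2 - ε ≤
          dHS (θ k₁ : Matrix (Fin n) (Fin n) ℂ) (θ k₂ : Matrix (Fin n) (Fin n) ℂ))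

/-!
Compose a sofic approximation `φ : G → Sym(F)` with the permutation representation
`Sym(F) → U(|F|)`. Since `d_HS(P_σ, P_τ)² = 2 d_F(σ, τ)`, a sofic approximation with precision
`ε² / 2` has multiplicativity defect at most `√(2 · ε² / 2) = ε`, and distinct elements of `K` stay
at distance at least `√(2 - ε²) ≥ √2 - ε`.
-/

open Matrix Equiv

section PermUnitary

variable {n α : Type*} [Fintype n] [DecidableEq n] [CommRing α] [StarRing α]

lemma Matrix.permMatrix_mem_unitaryGroup (σ : Perm n) : σ.permMatrix α ∈ unitaryGroup n α := by
  rw [mem_unitaryGroup_iff', star_eq_conjTranspose, conjTranspose_permMatrix, ← permMatrix_mul,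
    mul_inv_cancel, permMatrix_one]

variable (n α) in
/-- `permMatrix` is an antihomomorphism, hence the inverse. -/
noncomputable def permUnitary : Perm n →* unitaryGroup n α :=
  (permMatrixHom (n := n) (R := α)).codRestrict (unitaryGroup n α)
    fun σ => permMatrix_mem_unitaryGroup σ⁻¹

lemma permUnitary_apply (σ : Perm n) (i j : n) :
    (permUnitary n α σ : Matrix n n α) i j = if i = σ j then 1 else 0 := by
  change σ⁻¹.permMatrix α i j = _
  simp only [PEquiv.toMatrix_apply, toPEquiv_apply, Option.mem_some_iff, Perm.inv_eq_iff_eq]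

end PermUnitary

lemma sum_norm_sq_ite_sub_ite {ι 𝕜 : Type*} [Fintype ι] [DecidableEq ι] [NormedRing 𝕜]
    [NormOneClass 𝕜] (a b : ι) :
    ∑ i, ‖(if i = a then (1 : 𝕜) else 0) - if i = b then 1 else 0‖ ^ 2 = if a = b then 0 else 2 := by
  split_ifs with hab
  · simp [hab]
  · rw [Fintype.sum_eq_add a b hab]
    · simp [hab, Ne.symm hab, one_add_one_eq_two]
    · intro i ⟨hia, hib⟩
      simp [hia, hib]

lemma sqrt_two_mul_le {h ε : ℝ} (hε : 0 ≤ ε) (hh : h ≤ ε ^ 2 / 2) : √(2 * h) ≤ ε := by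
  rw [Real.sqrt_le_left hε]
  linarith

lemma sqrt_two_sub_le_sqrt_two_mul {h ε : ℝ} (hε : 0 ≤ ε) (hh : 1 - ε ^ 2 / 2 ≤ h) : √2 - ε ≤ √(2 * h) := by
  have hsq : 2 * h ≤ √(2 * h) ^ 2 := Real.sq_sqrt' ▸ le_max_left _ _
  rw [sub_le_iff_le_add, Real.sqrt_le_left (by positivity)]
  -- `(√(2h) + ε)² ≥ 2h + ε² ≥ 2`
  nlinarith [Real.sqrt_nonneg (2 * h)]

lemma hamDist_permCongr {F F' : Type*} [Fintype F] [Fintype F'] (e : F ≃ F') (α β : Perm F) :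
    hamDist (e.permCongr α) (e.permCongr β) = hamDist α β := by
  unfold hamDist
  rw [Fintype.card_congr e]
  congr 2
  exact Nat.card_congr (e.symm.subtypeEquiv fun x => by simp)

lemma dHS_permUnitary {n : ℕ} (σ τ : Perm (Fin n)) :
    dHS (permUnitary (Fin n) ℂ σ : Matrix (Fin n) (Fin n) ℂ) (permUnitary (Fin n) ℂ τ) =
      √(2 * hamDist σ τ) := by
  unfold dHS hamDist
  rw [Finset.sum_comm]
  simp only [permUnitary_apply, sum_norm_sq_ite_sub_ite, Finset.sum_ite, Finset.sum_const_zero,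
    Finset.sum_const, nsmul_eq_mul, zero_add, Nat.card_eq_fintype_card, Fintype.card_subtype,
    Fintype.card_fin]
  congr 1
  ring

noncomputable def permUnitaryFin (F : Type*) [Fintype F] :
    Perm F →* unitaryGroup (Fin (Fintype.card F)) ℂ :=
  (permUnitary _ ℂ).comp (Fintype.equivFin F).permCongrHom.toMonoidHom

lemma dHS_permUnitaryFin {F : Type*} [Fintype F] (σ τ : Perm F) :
    dHS (permUnitaryFin F σ : Matrix (Fin (Fintype.card F)) (Fin (Fintype.card F)) ℂ)
      (permUnitaryFin F τ) = √(2 * hamDist σ τ) := by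
  simp only [permUnitaryFin, MonoidHom.comp_apply, MulEquiv.coe_toMonoidHom, permCongrHom_coe,
    dHS_permUnitary, hamDist_permCongr]

/-- Every sofic group is hyperlinear. -/
theorem sofic_implies_hyperlinear {G : Type*} [Group G] (hG : IsSofic G) :
    IsHyperlinear G := by
  intro K ε hε
  obtain ⟨F, _, _, φ, hmul, hsep⟩ := hG K (ε ^ 2 / 2) (by positivity)
  refine ⟨Fintype.card F, Fintype.card_pos, fun g => permUnitaryFin F (φ g), ?_, ?_⟩
  · intro k₁ hk₁ k₂ hk₂
    rw [← map_mul, dHS_permUnitaryFin]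
    exact sqrt_two_mul_le hε.le (hmul k₁ hk₁ k₂ hk₂)
  · intro k₁ hk₁ k₂ hk₂ hne
    rw [dHS_permUnitaryFin]
    exact sqrt_two_sub_le_sqrt_two_mul hε.le (hsep k₁ hk₁ k₂ hk₂ hne)
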